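/- arXiv:1909.00975 — 6 statements merged into one kernel-verified Lean document; each statement's English description precedes it below -/
import Mathlib

section
/- Let Ω ⊆ ℝ² be simply connected and φ a C² solution of the minimal surface equation on Ω. If ψ : Ω → ℝ satisfies ψ_x = −φ_y/√(1+|∇φ|²) and ψ_y = φ_x/√(1+|∇φ|²), then |∇ψ| < 1 on Ω and ψ solves the maximal surface equation div(∇ψ/√(1−|∇ψ|²)) = 0. -/
noncomputable def px (f : ℝ × ℝ → ℝ) (z : ℝ × ℝ) : ℝ := fderiv ℝ f z (1, 0)

noncomputable def py (f : ℝ × ℝ → ℝ) (z : ℝ × ℝ) : ℝ := fderiv ℝ f z (0, 1)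

/-- `W φ z = √(1 + |∇φ(z)|²)`. -/
noncomputable def W (φ : ℝ × ℝ → ℝ) (z : ℝ × ℝ) : ℝ :=
  Real.sqrt (1 + (px φ z) ^ 2 + (py φ z) ^ 2)

/-- `Wm ψ z = √(1 − |∇ψ(z)|²)`. -/
noncomputable def Wm (ψ : ℝ × ℝ → ℝ) (z : ℝ × ℝ) : ℝ :=
  Real.sqrt (1 - (px ψ z) ^ 2 - (py ψ z) ^ 2)

/-- The minimal surface equation `div(∇φ/√(1+|∇φ|²)) = 0` on `Ω`. -/
def MinimalSurfaceEq (φ : ℝ × ℝ → ℝ) (Ω : Set (ℝ × ℝ)) : Prop :=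
  ∀ z ∈ Ω, px (fun z => px φ z / W φ z) z + py (fun z => py φ z / W φ z) z = 0

/-- The maximal surface equation `div(∇ψ/√(1−|∇ψ|²)) = 0` on `Ω`. -/
def MaximalSurfaceEq (ψ : ℝ × ℝ → ℝ) (Ω : Set (ℝ × ℝ)) : Prop :=
  ∀ z ∈ Ω, px (fun z => px ψ z / Wm ψ z) z + py (fun z => py ψ z / Wm ψ z) z = 0

/-!
The relations `ψ_x = -φ_y / W`, `ψ_y = φ_x / W` with `W = √(1 + |∇φ|²)` give
`1 - |∇ψ|² = 1 / W²`, so `ψ` is spacelike and `√(1 - |∇ψ|²) = 1 / W`. Hence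
`∇ψ / √(1 - |∇ψ|²) = (-φ_y, φ_x)`, whose divergence `-φ_yx + φ_xy` vanishes by the symmetry
of second derivatives of the `C²` function `φ`.
-/

section Calculus

variable {𝕜 E F : Type*} [NontriviallyNormedField 𝕜] [NormedAddCommGroup E] [NormedSpace 𝕜 E]
  [NormedAddCommGroup F] [NormedSpace 𝕜 F]

theorem fderiv_fderiv_apply_const {f : E → F} {z : E}
    (hf : DifferentiableAt 𝕜 (fderiv 𝕜 f) z) (v w : E) :
    fderiv 𝕜 (fun y => fderiv 𝕜 f y v) z w = fderiv 𝕜 (fderiv 𝕜 f) z w v := by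
  simp [fderiv_clm_apply hf (differentiableAt_const v)]

theorem IsSymmSndFDerivAt.fderiv_fderiv_apply_comm {f : E → F} {z : E}
    (hsymm : IsSymmSndFDerivAt 𝕜 f z) (hdf : DifferentiableAt 𝕜 (fderiv 𝕜 f) z) (v w : E) :
    fderiv 𝕜 (fun y => fderiv 𝕜 f y v) z w = fderiv 𝕜 (fun y => fderiv 𝕜 f y w) z v := by
  rw [fderiv_fderiv_apply_const hdf, fderiv_fderiv_apply_const hdf, hsymm]

end Calculus

theorem px_neg (f : ℝ × ℝ → ℝ) (z : ℝ × ℝ) : px (fun y => -f y) z = -px f z := by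
  simp [px, fderiv_fun_neg]

theorem py_px_eq_px_py {f : ℝ × ℝ → ℝ} {z : ℝ × ℝ} (hf : ContDiffAt ℝ 2 f z) :
    py (px f) z = px (py f) z :=
  (hf.isSymmSndFDerivAt (by simp [minSmoothness_of_isRCLikeNormedField])).fderiv_fderiv_apply_comm
    ((hf.fderiv_right (m := 1) le_rfl).differentiableAt one_ne_zero) _ _

theorem px_congr_of_eventuallyEq {f g : ℝ × ℝ → ℝ} {z : ℝ × ℝ} (h : f =ᶠ[nhds z] g) :
    px f z = px g z := by
  rw [px, h.fderiv_eq, px]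

theorem py_congr_of_eventuallyEq {f g : ℝ × ℝ → ℝ} {z : ℝ × ℝ} (h : f =ᶠ[nhds z] g) :
    py f z = py g z := by
  rw [py, h.fderiv_eq, py]

theorem sq_W (φ : ℝ × ℝ → ℝ) (z : ℝ × ℝ) : W φ z ^ 2 = 1 + px φ z ^ 2 + py φ z ^ 2 :=
  Real.sq_sqrt (by positivity)

theorem W_pos (φ : ℝ × ℝ → ℝ) (z : ℝ × ℝ) : 0 < W φ z :=
  Real.sqrt_pos.2 (by positivity)

section Duality

variable {φ ψ : ℝ × ℝ → ℝ} {z : ℝ × ℝ}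

theorem one_sub_sq_px_sub_sq_py_of_dual (h₁ : px ψ z = -py φ z / W φ z)
    (h₂ : py ψ z = px φ z / W φ z) :
    1 - px ψ z ^ 2 - py ψ z ^ 2 = (W φ z)⁻¹ ^ 2 := by
  have hW := W_pos φ z
  rw [h₁, h₂]
  field_simp
  linear_combination sq_W φ z

theorem Wm_eq_inv_W_of_dual (h₁ : px ψ z = -py φ z / W φ z) (h₂ : py ψ z = px φ z / W φ z) :
    Wm ψ z = (W φ z)⁻¹ := by
  rw [Wm, one_sub_sq_px_sub_sq_py_of_dual h₁ h₂, Real.sqrt_sq (inv_nonneg.2 (W_pos φ z).le)]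

theorem sqrt_sq_px_add_sq_py_lt_one_of_dual (h₁ : px ψ z = -py φ z / W φ z)
    (h₂ : py ψ z = px φ z / W φ z) :
    Real.sqrt (px ψ z ^ 2 + py ψ z ^ 2) < 1 := by
  have h := one_sub_sq_px_sub_sq_py_of_dual h₁ h₂
  have : 0 < (W φ z)⁻¹ ^ 2 := by have := W_pos φ z; positivity
  rw [Real.sqrt_lt' one_pos]
  linarith

theorem px_div_Wm_of_dual (h₁ : px ψ z = -py φ z / W φ z) (h₂ : py ψ z = px φ z / W φ z) :
    px ψ z / Wm ψ z = -py φ z := by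
  rw [Wm_eq_inv_W_of_dual h₁ h₂, h₁, div_inv_eq_mul, div_mul_cancel₀ _ (W_pos φ z).ne']

theorem py_div_Wm_of_dual (h₁ : px ψ z = -py φ z / W φ z) (h₂ : py ψ z = px φ z / W φ z) :
    py ψ z / Wm ψ z = px φ z := by
  rw [Wm_eq_inv_W_of_dual h₁ h₂, h₂, div_inv_eq_mul, div_mul_cancel₀ _ (W_pos φ z).ne']

end Duality

theorem stmt_1_general (Ω : Set (ℝ × ℝ)) (hΩ : IsOpen Ω)
    (φ : ℝ × ℝ → ℝ) (hφ : ContDiffOn ℝ 2 φ Ω)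
    (ψ : ℝ × ℝ → ℝ)
    (hdual : ∀ z ∈ Ω, px ψ z = -(py φ z) / W φ z ∧ py ψ z = px φ z / W φ z) :
    (∀ z ∈ Ω, Real.sqrt ((px ψ z) ^ 2 + (py ψ z) ^ 2) < 1) ∧ MaximalSurfaceEq ψ Ω := by
  refine ⟨fun z hz => sqrt_sq_px_add_sq_py_lt_one_of_dual (hdual z hz).1 (hdual z hz).2,
    fun z hz => ?_⟩
  have hx : (fun y => px ψ y / Wm ψ y) =ᶠ[nhds z] fun y => -py φ y := by
    filter_upwards [hΩ.mem_nhds hz] with y hy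
    exact px_div_Wm_of_dual (hdual y hy).1 (hdual y hy).2
  have hy : (fun y => py ψ y / Wm ψ y) =ᶠ[nhds z] px φ := by
    filter_upwards [hΩ.mem_nhds hz] with y hy
    exact py_div_Wm_of_dual (hdual y hy).1 (hdual y hy).2
  rw [px_congr_of_eventuallyEq hx, py_congr_of_eventuallyEq hy, px_neg,
    py_px_eq_px_py ((hφ z hz).contDiffAt (hΩ.mem_nhds hz)), neg_add_cancel]

/-- if `φ` is a C² solution of the minimal surface equation on a simply
connected `Ω` and `ψ` satisfies `ψ_x = −φ_y/√(1+|∇φ|²)`, `ψ_y = φ_x/√(1+|∇φ|²)`, then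
`|∇ψ| < 1` on `Ω` and `ψ` solves the maximal surface equation. -/
theorem stmt_1 (Ω : Set (ℝ × ℝ)) (hΩ : IsOpen Ω) (hsc : SimplyConnectedSpace Ω)
    (φ : ℝ × ℝ → ℝ) (hφ : ContDiffOn ℝ 2 φ Ω) (hmin : MinimalSurfaceEq φ Ω)
    (ψ : ℝ × ℝ → ℝ)
    (hdual : ∀ z ∈ Ω, px ψ z = -(py φ z) / W φ z ∧ py ψ z = px φ z / W φ z) :
    (∀ z ∈ Ω, Real.sqrt ((px ψ z) ^ 2 + (py ψ z) ^ 2) < 1) ∧ MaximalSurfaceEq ψ Ω :=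
  stmt_1_general Ω hΩ φ hφ ψ hdual
end

section
/- Let f = h + conj(g) : 𝔻 → ℂ be a harmonic mapping on the unit disk with h, g holomorphic, and suppose the analytic dilatation ω = g'/h' has a holomorphic square root √ω on 𝔻. Define F(w) = 2i ∫₀^w √(h'g') dζ (with √(h'g') = (√ω)·h'). Then the map X(w) = (Re f(w), Im f(w), Re F(w)) into ℝ³ is conformal in the generalized sense: the holomorphic derivatives Φⱼ = ∂Xⱼ/∂w satisfy Φ₁² + Φ₂² + Φ₃² = 0, and each coordinate of X is harmonic. -/
/-- Wirtinger derivative `∂X/∂w = (∂X/∂u − i ∂X/∂v)/2` of a real-valued function on `ℂ`. -/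
noncomputable def wirt (X : ℂ → ℝ) (w : ℂ) : ℂ :=
  (((fderiv ℝ X w 1 : ℝ) : ℂ) - Complex.I * ((fderiv ℝ X w Complex.I : ℝ) : ℂ)) / 2

/-- `X` is harmonic on `s`: its Laplacian vanishes. -/
def IsHarmonicOn (X : ℂ → ℝ) (s : Set ℂ) : Prop :=
  ContDiffOn ℝ 2 X s ∧ ∀ w ∈ s,
    fderiv ℝ (fun z => fderiv ℝ X z 1) w 1 +
      fderiv ℝ (fun z => fderiv ℝ X z Complex.I) w Complex.I = 0

lemma fderiv_clm_comp' (L : ℂ →L[ℝ] ℝ) {φ : ℂ → ℂ} {z : ℂ}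
    (hφ : DifferentiableAt ℂ φ z) (v : ℂ) :
    fderiv ℝ (fun x => L (φ x)) z v = L (deriv φ z * v) := by
  have h1 : HasFDerivAt φ ((fderiv ℂ φ z).restrictScalars ℝ) z :=
    hφ.hasFDerivAt.restrictScalars ℝ
  have h2 := L.hasFDerivAt.comp z h1
  rw [show (fun x => L (φ x)) = ⇑L ∘ φ from rfl, h2.fderiv]
  simp only [ContinuousLinearMap.coe_comp', Function.comp_apply,
    ContinuousLinearMap.coe_restrictScalars']
  congr 1
  have hv : v = v • (1:ℂ) := by simp
  rw [hv, map_smul, smul_eq_mul, fderiv_apply_one_eq_deriv]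
  rw [smul_eq_mul, mul_one]; ring

lemma wirt_re' {φ : ℂ → ℂ} {w : ℂ} (hφ : DifferentiableAt ℂ φ w) :
    wirt (fun z => (φ z).re) w = deriv φ w / 2 := by
  have h1 := fderiv_clm_comp' Complex.reCLM hφ 1
  have h2 := fderiv_clm_comp' Complex.reCLM hφ Complex.I
  simp only [Complex.reCLM_apply] at h1 h2
  unfold wirt
  rw [show (fun z => (φ z).re) = (fun x => Complex.reCLM (φ x)) from rfl] at *
  simp only [Complex.reCLM_apply] at *
  rw [h1, h2, mul_one]
  have : ((deriv φ w * Complex.I).re : ℝ) = -(deriv φ w).im := by simp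
  rw [this]
  push_cast
  rw [Complex.ext_iff]
  constructor <;> simp [Complex.div_re, Complex.div_im] <;> ring

lemma wirt_im' {φ : ℂ → ℂ} {w : ℂ} (hφ : DifferentiableAt ℂ φ w) :
    wirt (fun z => (φ z).im) w = -Complex.I * deriv φ w / 2 := by
  have h1 := fderiv_clm_comp' Complex.imCLM hφ 1
  have h2 := fderiv_clm_comp' Complex.imCLM hφ Complex.I
  simp only [Complex.imCLM_apply] at h1 h2
  unfold wirt
  rw [show (fun z => (φ z).im) = (fun x => Complex.imCLM (φ x)) from rfl] at *
  simp only [Complex.imCLM_apply] at *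
  rw [h1, h2, mul_one]
  have : ((deriv φ w * Complex.I).im : ℝ) = (deriv φ w).re := by simp
  rw [this]
  rw [Complex.ext_iff]
  constructor <;> simp [Complex.div_re, Complex.div_im] <;> ring

lemma harmonic_clm (L : ℂ →L[ℝ] ℝ) {φ : ℂ → ℂ}
    (hφ : DifferentiableOn ℂ φ (Metric.ball 0 1)) :
    IsHarmonicOn (fun z => L (φ z)) (Metric.ball 0 1) := by
  have hb : IsOpen (Metric.ball (0:ℂ) 1) := Metric.isOpen_ball
  have hA : AnalyticOnNhd ℂ φ (Metric.ball 0 1) := hφ.analyticOnNhd hb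
  constructor
  · exact L.contDiff.comp_contDiffOn ((hφ.contDiffOn hb).restrict_scalars ℝ)
  · intro w hw
    have hnh : Metric.ball (0:ℂ) 1 ∈ nhds w := hb.mem_nhds hw
    have hdφ : ∀ z ∈ Metric.ball (0:ℂ) 1, DifferentiableAt ℂ φ z :=
      fun z hz => (hA z hz).differentiableAt
    have hdφ' : DifferentiableAt ℂ (deriv φ) w := (hA.deriv w hw).differentiableAt
    have e1 : fderiv ℝ (fun z => fderiv ℝ (fun x => L (φ x)) z 1) w 1
        = fderiv ℝ (fun z => L (deriv φ z)) w 1 := by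
      congr 1
      apply Filter.EventuallyEq.fderiv_eq
      filter_upwards [hnh] with z hz
      rw [fderiv_clm_comp' L (hdφ z hz), mul_one]
    have e2 : fderiv ℝ (fun z => fderiv ℝ (fun x => L (φ x)) z Complex.I) w Complex.I
        = fderiv ℝ (fun z => L (deriv φ z * Complex.I)) w Complex.I := by
      congr 1
      apply Filter.EventuallyEq.fderiv_eq
      filter_upwards [hnh] with z hz
      rw [fderiv_clm_comp' L (hdφ z hz)]
    rw [e1, e2, fderiv_clm_comp' L hdφ', mul_one,
      fderiv_clm_comp' L (hdφ'.mul_const Complex.I),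
      deriv_mul_const hdφ' Complex.I]
    have : deriv (deriv φ) w * Complex.I * Complex.I = -(deriv (deriv φ) w) := by
      rw [mul_assoc, Complex.I_mul_I, mul_neg_one]
    rw [this, map_neg, add_neg_cancel]

/-- for a harmonic mapping `f = h + conj g` on the unit disk whose
dilatation `ω = g'/h'` has a holomorphic square root `s` (so `√(h'g') = s·h'`), and
`F(w) = 2i∫₀^w √(h'g')` (encoded by `F' = 2i·s·h'`, `F(0) = 0`), the map
`X = (Re f, Im f, Re F)` satisfies `Φ₁² + Φ₂² + Φ₃² = 0` for the Wirtinger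
derivatives `Φⱼ = ∂Xⱼ/∂w`, and each coordinate of `X` is harmonic. -/
theorem stmt_5 (h g s F : ℂ → ℂ)
    (hh : DifferentiableOn ℂ h (Metric.ball 0 1))
    (hg : DifferentiableOn ℂ g (Metric.ball 0 1))
    (hs : DifferentiableOn ℂ s (Metric.ball 0 1))
    (hsq : ∀ w ∈ Metric.ball (0:ℂ) 1, s w ^ 2 * deriv h w = deriv g w)
    (hF : DifferentiableOn ℂ F (Metric.ball 0 1))
    (hF' : ∀ w ∈ Metric.ball (0:ℂ) 1, deriv F w = 2 * Complex.I * (s w * deriv h w))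
    (hF0 : F 0 = 0) :
    (∀ w ∈ Metric.ball (0:ℂ) 1,
      (wirt (fun z => (h z + (starRingEnd ℂ) (g z)).re) w) ^ 2 +
        (wirt (fun z => (h z + (starRingEnd ℂ) (g z)).im) w) ^ 2 +
        (wirt (fun z => (F z).re) w) ^ 2 = 0) ∧
    IsHarmonicOn (fun z => (h z + (starRingEnd ℂ) (g z)).re) (Metric.ball 0 1) ∧
    IsHarmonicOn (fun z => (h z + (starRingEnd ℂ) (g z)).im) (Metric.ball 0 1) ∧
    IsHarmonicOn (fun z => (F z).re) (Metric.ball 0 1) := by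
  have hb : IsOpen (Metric.ball (0:ℂ) 1) := Metric.isOpen_ball
  have E1 : (fun z => (h z + (starRingEnd ℂ) (g z)).re)
      = (fun z => ((fun x => h x + g x) z).re) := by
    funext z; simp
  have E2 : (fun z => (h z + (starRingEnd ℂ) (g z)).im)
      = (fun z => ((fun x => h x - g x) z).im) := by
    funext z; simp [Complex.add_im, Complex.sub_im, Complex.conj_im]; ring
  refine ⟨?_, ?_, ?_, ?_⟩
  · intro w hw
    have hhw : DifferentiableAt ℂ h w := hh.differentiableAt (hb.mem_nhds hw)
    have hgw : DifferentiableAt ℂ g w := hg.differentiableAt (hb.mem_nhds hw)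
    have hFw : DifferentiableAt ℂ F w := hF.differentiableAt (hb.mem_nhds hw)
    rw [E1, E2, wirt_re' (show DifferentiableAt ℂ (fun x => h x + g x) w from hhw.add hgw),
      wirt_im' (show DifferentiableAt ℂ (fun x => h x - g x) w from hhw.sub hgw), wirt_re' hFw,
      deriv_fun_add hhw hgw, deriv_fun_sub hhw hgw, hF' w hw]
    linear_combination ((deriv h w - deriv g w)^2/4 + (s w)^2*(deriv h w)^2) * Complex.I_sq
      + (-(deriv h w)) * (hsq w hw)
  · rw [E1]; exact harmonic_clm Complex.reCLM (hh.add hg)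
  · rw [E2]; exact harmonic_clm Complex.imCLM (hh.sub hg)
  · exact harmonic_clm Complex.reCLM hF
end

section
/- Let f = h + conj(g) be an orientation-preserving univalent harmonic mapping on 𝔻 with |ω| < 1 where ω = g'/h' has a holomorphic square root. Define φ = (Re F)∘f⁻¹ and ψ = (Im F)∘f⁻¹ on Ω = f(𝔻), where F(w) = 2i∫₀^w √(h'g') dζ. Then φ and ψ satisfy the duality relation ψ_x = −φ_y/√(1+|∇φ|²) and ψ_y = φ_x/√(1+|∇φ|²) on Ω. -/
open Complex

lemma decompR (A : ℂ →L[ℝ] ℝ) (z : ℂ) : A z = z.re * A 1 + z.im * A Complex.I := by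
  have hz : z = z.re • (1:ℂ) + z.im • Complex.I := by
    simp [Complex.real_smul]
  calc A z = A (z.re • (1:ℂ) + z.im • Complex.I) := by rw [← hz]
    _ = z.re * A 1 + z.im * A Complex.I := by
        rw [map_add, map_smul, map_smul]; simp [smul_eq_mul]



/-- let `f = h + conj g` be an orientation-preserving (`|ω| < 1`)
univalent harmonic mapping on the unit disk whose dilatation `ω = g'/h'` has a
holomorphic square root `s`, and `F' = 2i·s·h'`. If `φ = (Re F)∘f⁻¹` and
`ψ = (Im F)∘f⁻¹` on `Ω = f(𝔻)` (encoded by `φ∘f = Re F`, `ψ∘f = Im F`), then `φ`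
and `ψ` satisfy the duality relation `ψ_x = −φ_y/√(1+|∇φ|²)`,
`ψ_y = φ_x/√(1+|∇φ|²)` at every point `z = f(w)` of `Ω`. -/
theorem stmt_8 (h g s F : ℂ → ℂ)
    (hh : DifferentiableOn ℂ h (Metric.ball 0 1))
    (hg : DifferentiableOn ℂ g (Metric.ball 0 1))
    (hs : DifferentiableOn ℂ s (Metric.ball 0 1))
    (hsq : ∀ w ∈ Metric.ball (0:ℂ) 1, s w ^ 2 * deriv h w = deriv g w)
    (horient : ∀ w ∈ Metric.ball (0:ℂ) 1, ‖deriv g w‖ < ‖deriv h w‖)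
    (hinj : Set.InjOn (fun w => h w + (starRingEnd ℂ) (g w)) (Metric.ball 0 1))
    (hF : DifferentiableOn ℂ F (Metric.ball 0 1))
    (hF' : ∀ w ∈ Metric.ball (0:ℂ) 1, deriv F w = 2 * Complex.I * (s w * deriv h w))
    (φ ψ : ℂ → ℝ)
    (hφgraph : ∀ w ∈ Metric.ball (0:ℂ) 1, φ (h w + (starRingEnd ℂ) (g w)) = (F w).re)
    (hψgraph : ∀ w ∈ Metric.ball (0:ℂ) 1, ψ (h w + (starRingEnd ℂ) (g w)) = (F w).im)
    (hφdiff : ∀ w ∈ Metric.ball (0:ℂ) 1, DifferentiableAt ℝ φ (h w + (starRingEnd ℂ) (g w)))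
    (hψdiff : ∀ w ∈ Metric.ball (0:ℂ) 1, DifferentiableAt ℝ ψ (h w + (starRingEnd ℂ) (g w)))
    (w : ℂ) (hw : w ∈ Metric.ball (0:ℂ) 1) :
    fderiv ℝ ψ (h w + (starRingEnd ℂ) (g w)) 1 =
      -(fderiv ℝ φ (h w + (starRingEnd ℂ) (g w)) Complex.I) /
        Real.sqrt (1 + (fderiv ℝ φ (h w + (starRingEnd ℂ) (g w)) 1) ^ 2 +
          (fderiv ℝ φ (h w + (starRingEnd ℂ) (g w)) Complex.I) ^ 2) ∧
    fderiv ℝ ψ (h w + (starRingEnd ℂ) (g w)) Complex.I =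
      fderiv ℝ φ (h w + (starRingEnd ℂ) (g w)) 1 /
        Real.sqrt (1 + (fderiv ℝ φ (h w + (starRingEnd ℂ) (g w)) 1) ^ 2 +
          (fderiv ℝ φ (h w + (starRingEnd ℂ) (g w)) Complex.I) ^ 2) := by
  have hball : Metric.ball (0:ℂ) 1 ∈ nhds w := Metric.isOpen_ball.mem_nhds hw
  have hG : deriv g w = s w ^ 2 * deriv h w := (hsq w hw).symm
  have hFd : deriv F w = 2 * Complex.I * (s w * deriv h w) := hF' w hw
  -- positivity facts
  have hHne : deriv h w ≠ 0 := by
    intro h0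
    have h1 := horient w hw
    rw [h0] at h1
    simp only [map_zero, norm_zero] at h1
    exact (norm_nonneg _).not_gt h1
  have hxy : 0 < (deriv h w).re ^ 2 + (deriv h w).im ^ 2 := by
    have h1 := Complex.normSq_pos.mpr hHne
    rw [Complex.normSq_apply] at h1
    nlinarith [h1]
  have ht : (s w).re ^ 2 + (s w).im ^ 2 < 1 := by
    have h1 := horient w hw
    rw [hG, norm_mul, norm_pow] at h1
    have habsH : 0 < ‖deriv h w‖ := lt_of_le_of_lt (by positivity) h1
    have h2 : ‖s w‖ ^ 2 < 1 := by
      by_contra hcon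
      push_neg at hcon
      nlinarith
    rw [Complex.sq_norm, Complex.normSq_apply] at h2
    nlinarith [h2]
  -- fderiv machinery
  have hhf : HasFDerivAt h
      ((ContinuousLinearMap.smulRight (1 : ℂ →L[ℂ] ℂ) (deriv h w)).restrictScalars ℝ) w :=
    ((hh.differentiableAt hball).hasDerivAt.hasFDerivAt).restrictScalars ℝ
  have hgf : HasFDerivAt (fun w => (starRingEnd ℂ) (g w))
      ((Complex.conjCLE.toContinuousLinearMap).comp
        ((ContinuousLinearMap.smulRight (1 : ℂ →L[ℂ] ℂ) (deriv g w)).restrictScalars ℝ)) w :=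
    (Complex.conjCLE.toContinuousLinearMap.hasFDerivAt).comp w
      (((hg.differentiableAt hball).hasDerivAt.hasFDerivAt).restrictScalars ℝ)
  have hFf : HasFDerivAt F
      ((ContinuousLinearMap.smulRight (1 : ℂ →L[ℂ] ℂ) (deriv F w)).restrictScalars ℝ) w :=
    ((hF.differentiableAt hball).hasDerivAt.hasFDerivAt).restrictScalars ℝ
  have hf : HasFDerivAt (fun w => h w + (starRingEnd ℂ) (g w))
      (((ContinuousLinearMap.smulRight (1 : ℂ →L[ℂ] ℂ) (deriv h w)).restrictScalars ℝ) +
       ((Complex.conjCLE.toContinuousLinearMap).comp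
        ((ContinuousLinearMap.smulRight (1 : ℂ →L[ℂ] ℂ) (deriv g w)).restrictScalars ℝ))) w :=
    hhf.add hgf
  set z := h w + (starRingEnd ℂ) (g w) with hzdef
  set A := fderiv ℝ φ z with hAdef
  set B := fderiv ℝ ψ z with hBdef
  have hAz : HasFDerivAt φ A z := (hφdiff w hw).hasFDerivAt
  have hBz : HasFDerivAt ψ B z := (hψdiff w hw).hasFDerivAt
  have hφc := hAz.comp w hf
  have hψc := hBz.comp w hf
  have heqφ : (fun u => φ (h u + (starRingEnd ℂ) (g u))) =ᶠ[nhds w] (fun u => (F u).re) :=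
    Filter.eventuallyEq_of_mem hball hφgraph
  have heqψ : (fun u => ψ (h u + (starRingEnd ℂ) (g u))) =ᶠ[nhds w] (fun u => (F u).im) :=
    Filter.eventuallyEq_of_mem hball hψgraph
  have hφF : HasFDerivAt (fun u => (F u).re) _ w := hφc.congr_of_eventuallyEq heqφ.symm
  have hψF : HasFDerivAt (fun u => (F u).im) _ w := hψc.congr_of_eventuallyEq heqψ.symm
  have hre := (Complex.reCLM.hasFDerivAt).comp w hFf
  have him := (Complex.imCLM.hasFDerivAt).comp w hFf
  have hAeq := hφF.unique hre
  have hBeq := hψF.unique him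
  have E1 := ContinuousLinearMap.ext_iff.mp hAeq 1
  have E2 := ContinuousLinearMap.ext_iff.mp hAeq Complex.I
  have E3 := ContinuousLinearMap.ext_iff.mp hBeq 1
  have E4 := ContinuousLinearMap.ext_iff.mp hBeq Complex.I
  simp only [ContinuousLinearMap.coe_comp', ContinuousLinearMap.add_apply, Function.comp_apply,
    ContinuousLinearMap.coe_restrictScalars', ContinuousLinearMap.smulRight_apply,
    ContinuousLinearMap.one_apply, smul_eq_mul, one_mul,
    ContinuousLinearEquiv.coe_coe, Complex.conjCLE_apply, Complex.reCLM_apply,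
    Complex.imCLM_apply, Complex.re_ofNat, Complex.im_ofNat, hG, hFd] at E1 E2 E3 E4
  rw [decompR A] at E1 E2
  rw [decompR B] at E3 E4
  simp only [Complex.add_re, Complex.add_im, Complex.mul_re, Complex.mul_im,
    Complex.conj_re, Complex.conj_im, Complex.I_re, Complex.I_im,
    Complex.ofReal_re, Complex.ofReal_im, Complex.one_re, Complex.one_im,
    Complex.re_ofNat, Complex.im_ofNat, pow_two] at E1 E2 E3 E4
  ring_nf at E1 E2 E3 E4

  set x := (deriv h w).re with hx
  set y := (deriv h w).im with hy
  set p := (s w).re with hp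
  set q := (s w).im with hq
  set a := A 1 with ha
  set b := A Complex.I with hb
  set c := B 1 with hc
  set d := B Complex.I with hd
  clear_value x y p q a b c d
  clear hφc hψc hφF hψF hre him hAeq hBeq heqφ heqψ hf hhf hgf hFf hAz hBz hG hFd hball hsq horient hinj hφgraph hψgraph hφdiff hψdiff hh hg hs hF hF' hHne
  have hm : (0:ℝ) < 1 - (p^2+q^2) := by linarith
  have h1t : (0:ℝ) < 1 + (p^2+q^2) := by positivity
  have hK : ((x^2+y^2)*(1+(p^2+q^2))) ≠ 0 := ne_of_gt (mul_pos hxy h1t)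
  have hK2 : ((x^2+y^2)*(1-(p^2+q^2))) ≠ 0 := ne_of_gt (mul_pos hxy hm)
  have ka : a * (1 - (p^2+q^2)) = -2*q :=
    mul_right_cancel₀ hK (by linear_combination (x - ((p^2-q^2)*x - 2*p*q*y)) * E1 - (y - ((p^2-q^2)*y + 2*p*q*x)) * E2)
  have kb : b * (1 - (p^2+q^2)) = -2*p :=
    mul_right_cancel₀ hK (by linear_combination (y + ((p^2-q^2)*y + 2*p*q*x)) * E1 + (x + ((p^2-q^2)*x - 2*p*q*y)) * E2)
  have kc : c * (1 + (p^2+q^2)) = 2*p :=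
    mul_right_cancel₀ hK2 (by linear_combination (x - ((p^2-q^2)*x - 2*p*q*y)) * E3 - (y - ((p^2-q^2)*y + 2*p*q*x)) * E4)
  have kd : d * (1 + (p^2+q^2)) = -2*q :=
    mul_right_cancel₀ hK2 (by linear_combination (y + ((p^2-q^2)*y + 2*p*q*x)) * E3 + (x + ((p^2-q^2)*x - 2*p*q*y)) * E4)
  have ha2 : a = -2*q/(1-(p^2+q^2)) := by rw [eq_div_iff hm.ne']; exact ka
  have hb2 : b = -2*p/(1-(p^2+q^2)) := by rw [eq_div_iff hm.ne']; exact kb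
  have hc2 : c = 2*p/(1+(p^2+q^2)) := by rw [eq_div_iff h1t.ne']; exact kc
  have hd2 : d = -2*q/(1+(p^2+q^2)) := by rw [eq_div_iff h1t.ne']; exact kd
  have hsqrt : Real.sqrt (1 + a^2 + b^2) = (1+(p^2+q^2))/(1-(p^2+q^2)) := by
    have hS : 1 + a^2 + b^2 = ((1+(p^2+q^2))/(1-(p^2+q^2)))^2 := by
      rw [ha2, hb2]
      field_simp
      ring
    rw [hS, Real.sqrt_sq (div_nonneg h1t.le hm.le)]
  constructor
  · rw [hsqrt, hb2, hc2]
    field_simp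
    try ring
  · rw [hsqrt, ha2, hd2]
    field_simp
    try ring
end

section
/- Let φ, ψ : Ω → ℝ be C¹ on an open set Ω ⊆ ℝ² containing the rectangle R = {z : |Re z − x₀| ≤ ε, 0 < Im z ≤ ε}, related by the duality −φ_y = ψ_x/√(1−|∇ψ|²), and suppose |1 − ψ_x(z)| ≤ C'(Im z)² on R with 1 − |∇ψ|² ≤ 2C'(Im z)². Then there exist constants C₁, C₂ > 0 with −φ_y(z) ≥ C₁/Im z − C₂ on R, and consequently φ(z_n) → +∞ for every sequence z_n ∈ R with Im z_n → 0 and Re z_n → x₀. -/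
open Filter

/-- The rectangle `R = {z : |Re z − x₀| ≤ ε, 0 < Im z ≤ ε}`. -/
def Rset (x₀ ε : ℝ) : Set ℂ := {z : ℂ | |z.re - x₀| ≤ ε ∧ 0 < z.im ∧ z.im ≤ ε}

/-- let `φ, ψ` be C¹ on an open `Ω` containing the rectangle `R`,
related by the duality `−φ_y = ψ_x/√(1−|∇ψ|²)`, with `|∇ψ| < 1`,
`|1 − ψ_x(z)| ≤ C'(Im z)²` and `1 − |∇ψ|² ≤ 2C'(Im z)²` on `R` (with `ε` small
enough that `C'ε² < 1`). Then there are `C₁, C₂ > 0` with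
`−φ_y(z) ≥ C₁/Im z − C₂` on `R`, and `φ(z_n) → +∞` for every sequence `z_n ∈ R`
with `Im z_n → 0` and `Re z_n → x₀`. -/
theorem stmt_11 (Ω : Set ℂ) (hΩ : IsOpen Ω)
    (φ ψ : ℂ → ℝ) (hφ : ContDiffOn ℝ 1 φ Ω) (hψ : ContDiffOn ℝ 1 ψ Ω)
    (x₀ ε C' : ℝ) (hε : 0 < ε) (hC' : 0 < C') (hsmall : C' * ε ^ 2 < 1)
    (hR : Rset x₀ ε ⊆ Ω)
    (hsp : ∀ z ∈ Ω, (fderiv ℝ ψ z 1) ^ 2 + (fderiv ℝ ψ z Complex.I) ^ 2 < 1)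
    (hdual : ∀ z ∈ Rset x₀ ε,
      -(fderiv ℝ φ z Complex.I) =
        fderiv ℝ ψ z 1 /
          Real.sqrt (1 - ((fderiv ℝ ψ z 1) ^ 2 + (fderiv ℝ ψ z Complex.I) ^ 2)))
    (h1 : ∀ z ∈ Rset x₀ ε, |1 - fderiv ℝ ψ z 1| ≤ C' * z.im ^ 2)
    (h2 : ∀ z ∈ Rset x₀ ε,
      1 - ((fderiv ℝ ψ z 1) ^ 2 + (fderiv ℝ ψ z Complex.I) ^ 2) ≤ 2 * C' * z.im ^ 2) :
    ∃ C₁ > (0:ℝ), ∃ C₂ > (0:ℝ),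
      (∀ z ∈ Rset x₀ ε, C₁ / z.im - C₂ ≤ -(fderiv ℝ φ z Complex.I)) ∧
      (∀ zn : ℕ → ℂ, (∀ n, zn n ∈ Rset x₀ ε) →
        Tendsto (fun n => (zn n).im) atTop (nhds 0) →
        Tendsto (fun n => (zn n).re) atTop (nhds x₀) →
        Tendsto (fun n => φ (zn n)) atTop atTop) := by
  set R : Set ℂ := Rset x₀ ε with hRdef
  have hRmem : ∀ z ∈ R, |z.re - x₀| ≤ ε ∧ 0 < z.im ∧ z.im ≤ ε := fun z hz => hz
  set s := Real.sqrt (2 * C') with hsdef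
  have hs0 : 0 < s := Real.sqrt_pos.2 (by linarith)
  have hs2 : s ^ 2 = 2 * C' := Real.sq_sqrt (by linarith)
  have key : ∀ z ∈ R, 1/s / z.im - C' * ε / s ≤ -(fderiv ℝ φ z Complex.I) := by
    intro z hz
    obtain ⟨hx, hy0, hyε⟩ := hRmem z hz
    set a := fderiv ℝ ψ z 1
    set b := fderiv ℝ ψ z Complex.I
    set y := z.im
    have hD : 0 < 1 - (a ^ 2 + b ^ 2) := by have := hsp z (hR hz); linarith
    have ha1 : 1 - C' * y ^ 2 ≤ a := by
      have := (abs_le.1 (h1 z hz)).2; linarith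
    have hnum0 : 0 ≤ 1 - C' * y ^ 2 := by
      nlinarith [mul_le_mul_of_nonneg_left (pow_le_pow_left₀ hy0.le hyε 2) hC'.le]
    have hsqle : Real.sqrt (1 - (a ^ 2 + b ^ 2)) ≤ s * y := by
      calc Real.sqrt (1 - (a ^ 2 + b ^ 2)) ≤ Real.sqrt (2 * C' * y ^ 2) :=
            Real.sqrt_le_sqrt (h2 z hz)
        _ = s * y := by
            rw [Real.sqrt_mul (by linarith), Real.sqrt_sq hy0.le]
    have hsq0 : 0 < Real.sqrt (1 - (a ^ 2 + b ^ 2)) := Real.sqrt_pos.2 hD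
    rw [hdual z hz]
    have hdiv : (1 - C' * y ^ 2) / (s * y) ≤ a / Real.sqrt (1 - (a ^ 2 + b ^ 2)) :=
      div_le_div₀ (by linarith) ha1 hsq0 hsqle
    have e1 : (1 - C' * y ^ 2) / (s * y) = 1/s/y - C' * y / s := by
      field_simp
    have e2 : C' * y / s ≤ C' * ε / s := by gcongr
    linarith
  refine ⟨1/s, by positivity, C' * ε / s, by positivity, key, ?_⟩
  intro zn hzn him _hre
  set C₁ := 1/s with hC₁def
  set C₂ := C' * ε / s with hC₂def
  have hC₁0 : 0 < C₁ := by positivity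
  have hC₂0 : 0 < C₂ := by positivity
  have hφc : ContinuousOn φ Ω := hφ.continuousOn
  have htopmem : ∀ x ∈ Set.Icc (x₀ - ε) (x₀ + ε), ((x:ℂ) + ε • Complex.I) ∈ R := by
    intro x hx
    refine ⟨?_, by simp [hε], by simp⟩
    simpa using abs_le.2 ⟨by linarith [hx.1], by linarith [hx.2]⟩
  have hcont : ContinuousOn (fun x : ℝ => φ ((x:ℂ) + ε • Complex.I))
      (Set.Icc (x₀ - ε) (x₀ + ε)) := by
    apply hφc.comp (Continuous.continuousOn (Complex.continuous_ofReal.add continuous_const))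
    exact fun x hx => hR (htopmem x hx)
  obtain ⟨m, hm⟩ := isCompact_Icc.bddBelow_image hcont
  have hlow : ∀ n, (m + C₁ * Real.log ε - C₂ * ε) - C₁ * Real.log ((zn n).im) ≤ φ (zn n) := by
    intro n
    obtain ⟨hx, hy0, hyε⟩ := hRmem _ (hzn n)
    set x := (zn n).re
    set y := (zn n).im
    set g : ℝ → ℝ := fun t => φ ((x:ℂ) + t • Complex.I) + C₁ * Real.log t - C₂ * t with hgdef
    have hmemR : ∀ t ∈ Set.Icc y ε, ((x:ℂ) + t • Complex.I) ∈ R := by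
      intro t ht
      exact ⟨by simpa using hx, by simpa using lt_of_lt_of_le hy0 ht.1, by simpa using ht.2⟩
    have hderiv : ∀ t ∈ interior (Set.Icc y ε),
        HasDerivAt g (fderiv ℝ φ ((x:ℂ) + t • Complex.I) Complex.I + C₁ * t⁻¹ - C₂) t := by
      intro t ht
      rw [interior_Icc] at ht
      have ht0 : 0 < t := lt_of_lt_of_le hy0 ht.1.le
      have hzΩ : ((x:ℂ) + t • Complex.I) ∈ Ω := hR (hmemR t ⟨ht.1.le, ht.2.le⟩)
      have hdφ : DifferentiableAt ℝ φ ((x:ℂ) + t • Complex.I) :=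
        (hφ.differentiableOn one_ne_zero).differentiableAt (hΩ.mem_nhds hzΩ)
      have hc : HasDerivAt (fun t : ℝ => (x:ℂ) + t • Complex.I) Complex.I t := by
        simpa using ((hasDerivAt_id t).smul_const Complex.I).const_add (x:ℂ)
      have hp1 : HasDerivAt (fun t : ℝ => φ ((x:ℂ) + t • Complex.I))
          (fderiv ℝ φ ((x:ℂ) + t • Complex.I) Complex.I) t :=
        hdφ.hasFDerivAt.comp_hasDerivAt t hc
      have hp2 : HasDerivAt (fun t : ℝ => C₁ * Real.log t) (C₁ * t⁻¹) t :=
        (Real.hasDerivAt_log ht0.ne').const_mul C₁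
      have hp3 : HasDerivAt (fun t : ℝ => C₂ * t) C₂ t := by
        simpa using (hasDerivAt_id t).const_mul C₂
      exact (hp1.add hp2).sub hp3
    have hanti : AntitoneOn g (Set.Icc y ε) := by
      have hgc : ContinuousOn g (Set.Icc y ε) := by
        refine ContinuousOn.sub (ContinuousOn.add ?_ ?_) ?_
        · exact hφc.comp (Continuous.continuousOn
            (continuous_const.add (continuous_id.smul continuous_const)))
            (fun t ht => hR (hmemR t ht))
        · exact continuousOn_const.mul (Real.continuousOn_log.mono
            (fun t ht => by simpa using (lt_of_lt_of_le hy0 ht.1).ne'))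
        · exact (continuous_const.mul continuous_id).continuousOn
      apply antitoneOn_of_deriv_nonpos (convex_Icc y ε) hgc
      · intro t ht
        exact (hderiv t ht).differentiableAt.differentiableWithinAt
      · intro t ht
        rw [(hderiv t ht).deriv]
        rw [interior_Icc] at ht
        have ht0 : 0 < t := lt_of_lt_of_le hy0 ht.1.le
        have hk := key _ (hmemR t ⟨ht.1.le, ht.2.le⟩)
        have him' : ((x:ℂ) + t • Complex.I).im = t := by simp
        rw [him'] at hk
        rw [div_eq_mul_inv] at hk
        linarith
    have hyIcc : y ∈ Set.Icc y ε := ⟨le_refl y, hyε⟩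
    have hεIcc : ε ∈ Set.Icc y ε := ⟨hyε, le_refl ε⟩
    have hge : g ε ≤ g y := hanti hyIcc hεIcc hyε
    have hxIcc : x ∈ Set.Icc (x₀ - ε) (x₀ + ε) := by
      have := abs_le.1 hx; exact ⟨by linarith [this.1], by linarith [this.2]⟩
    have hmx : m ≤ φ ((x:ℂ) + ε • Complex.I) := hm (Set.mem_image_of_mem _ hxIcc)
    have hz : (x:ℂ) + y • Complex.I = zn n := by
      simp [Complex.ext_iff]; exact ⟨rfl, rfl⟩
    rw [hgdef] at hge
    simp only [hz] at hge
    nlinarith [mul_pos hC₂0 hy0]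
  have hl1 : Tendsto (fun n => (zn n).im) atTop (nhdsWithin 0 (Set.Ioi 0)) :=
    tendsto_nhdsWithin_of_tendsto_nhds_of_eventually_within _ him
      (Eventually.of_forall fun n => (hzn n).2.1)
  have hl2 : Tendsto (fun n => Real.log ((zn n).im)) atTop atBot :=
    Real.tendsto_log_nhdsGT_zero.comp hl1
  have hl3 : Tendsto (fun n => C₁ * Real.log ((zn n).im)) atTop atBot :=
    hl2.const_mul_atBot hC₁0
  have hl4 : Tendsto (fun n => (m + C₁ * Real.log ε - C₂ * ε) - C₁ * Real.log ((zn n).im))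
      atTop atTop := by
    have := Filter.tendsto_atTop_add_const_left atTop (m + C₁ * Real.log ε - C₂ * ε)
      (Filter.tendsto_neg_atBot_atTop.comp hl3)
    simpa [sub_eq_add_neg, Function.comp] using this
  exact tendsto_atTop_mono hlow hl4
end

section
/- Let V : ∂𝔻 → ℂ be defined by V(e^{it}) = v₀ for θ₀ < t < θ₀ + π and V(e^{it}) = 0 otherwise, where v₀ ∈ ℂ and w₀ = e^{iθ₀}. Then the function H(w) = (1/(2πi)) ∫_{∂𝔻} V(ζ)/(ζ−w)² dζ satisfies H(w) = −(v₀/(2πi))·(1/(w−w₀))·(1 + O(|w−w₀|)) as w → w₀ within any Stolz angle at w₀. -/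
open Metric

/-- The Stolz angle `A_α(w₀) = {w ∈ 𝔻 : |arg(1 − conj(w₀)w)| < α, |w₀ − w| < cos α}`. -/
def stolzAngle (w₀ : ℂ) (α : ℝ) : Set ℂ :=
  {w : ℂ | w ∈ ball (0:ℂ) 1 ∧ |Complex.arg (1 - (starRingEnd ℂ) w₀ * w)| < α ∧
    ‖w₀ - w‖ < Real.cos α}

lemma exp_ne (w : ℂ) (hw : ‖w‖ < 1) (t : ℝ) :
    Complex.exp (t * Complex.I) - w ≠ 0 := by
  intro h
  have h1 : Complex.exp (↑t * Complex.I) = w := by linear_combination h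
  have : ‖Complex.exp (↑t * Complex.I)‖ = 1 :=
    Complex.norm_exp_ofReal_mul_I t
  rw [h1] at this
  linarith

lemma key_integral (v₀ w : ℂ) (hw : ‖w‖ < 1) (a b : ℝ) :
    (∫ t in a..b, v₀ * (Complex.I * Complex.exp (t * Complex.I)) /
        (Complex.exp (t * Complex.I) - w) ^ 2)
    = v₀ / (Complex.exp (a * Complex.I) - w) - v₀ / (Complex.exp (b * Complex.I) - w) := by
  have hcont : Continuous (fun t : ℝ => v₀ * (Complex.I * Complex.exp (t * Complex.I)) /
      (Complex.exp (t * Complex.I) - w) ^ 2) := by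
    apply Continuous.div
    · continuity
    · continuity
    · intro t
      exact pow_ne_zero 2 (exp_ne w hw t)
  have hderiv : ∀ t ∈ Set.uIcc a b,
      HasDerivAt (fun t : ℝ => -v₀ / (Complex.exp (t * Complex.I) - w))
        (v₀ * (Complex.I * Complex.exp (t * Complex.I)) /
          (Complex.exp (t * Complex.I) - w) ^ 2) t := by
    intro t _
    have h1 : HasDerivAt (fun t : ℝ => (t : ℂ) * Complex.I) Complex.I t := by
      simpa using (Complex.ofRealCLM.hasDerivAt.mul_const Complex.I)
    have h2 : HasDerivAt (fun t : ℝ => Complex.exp ((t : ℂ) * Complex.I) - w)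
        (Complex.exp ((t : ℂ) * Complex.I) * Complex.I) t := (h1.cexp).sub_const w
    have h3 := (hasDerivAt_const t (-v₀)).fun_div h2 (exp_ne w hw t)
    convert h3 using 1
    exacts [rfl, by ring]
  rw [intervalIntegral.integral_eq_sub_of_hasDerivAt hderiv (hcont.intervalIntegrable a b)]
  ring

/-- with `V = v₀` on the arc `{e^{it} : θ₀ < t < θ₀ + π}` and `0`
elsewhere, the function `H(w) = (1/2πi)∫_{∂𝔻} V(ζ)/(ζ−w)² dζ` (written as an integral
in `t`, with `dζ = i e^{it} dt`) satisfies
`H(w) = −(v₀/2πi)·(1/(w−w₀))·(1 + O(|w−w₀|))` as `w → w₀ = e^{iθ₀}` in any Stolz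
angle, i.e. `H(w) + v₀/(2πi(w−w₀))` is bounded on each Stolz angle at `w₀`. -/
theorem stmt_13 (v₀ : ℂ) (θ₀ : ℝ) (w₀ : ℂ) (hw₀ : w₀ = Complex.exp (θ₀ * Complex.I))
    (H : ℂ → ℂ)
    (hH : ∀ w ∈ ball (0:ℂ) 1,
      H w = (2 * (Real.pi : ℂ) * Complex.I)⁻¹ *
        ∫ t in θ₀..(θ₀ + Real.pi),
          v₀ * (Complex.I * Complex.exp (t * Complex.I)) /
            (Complex.exp (t * Complex.I) - w) ^ 2) :
    ∀ α ∈ Set.Ioo (0:ℝ) (Real.pi / 2), ∃ C > (0:ℝ), ∀ w ∈ stolzAngle w₀ α,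
      ‖H w + v₀ / (2 * (Real.pi : ℂ) * Complex.I * (w - w₀))‖ ≤ C := by
  intro α hα
  refine ⟨‖v₀‖ / (2 * Real.pi) + 1, by positivity, ?_⟩
  rintro w ⟨hwb, _, hws⟩
  have hw1 : ‖w‖ < 1 := by simpa [Complex.dist_eq] using hwb
  have hcos : Real.cos α < 1 := by
    calc Real.cos α < Real.cos 0 :=
          Real.cos_lt_cos_of_nonneg_of_le_pi le_rfl
            (by linarith [hα.2, Real.pi_pos]) hα.1
      _ = 1 := Real.cos_zero
  have hw₀abs : ‖w₀‖ = 1 := by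
    rw [hw₀]; exact Complex.norm_exp_ofReal_mul_I θ₀
  -- |w₀ + w| ≥ 2 - |w₀ - w| > 2 - cos α > 1
  have hlow : 1 < ‖w₀ + w‖ := by
    have h1 : ‖2 * w₀‖ ≤ ‖w₀ + w‖ + ‖w₀ - w‖ := by
      have : (2 : ℂ) * w₀ = (w₀ + w) + (w₀ - w) := by ring
      rw [this]; exact norm_add_le _ _
    have h2 : ‖2 * w₀‖ = 2 := by
      simp [hw₀abs]
    nlinarith
  have hsum_ne : w₀ + w ≠ 0 := by
    intro h; rw [h] at hlow; simp at hlow; linarith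
  have hdiff_ne : w₀ - w ≠ 0 := by
    intro h
    have : w₀ = w := by linear_combination h
    rw [this] at hw₀abs; linarith
  -- compute H w
  have hexp2 : Complex.exp (((θ₀ + Real.pi) : ℝ) * Complex.I) = -w₀ := by
    push_cast
    rw [add_mul, Complex.exp_add, hw₀, Complex.exp_pi_mul_I]
    ring
  have hHw := hH w hwb
  rw [key_integral v₀ w hw1 θ₀ (θ₀ + Real.pi)] at hHw
  rw [hexp2, ← hw₀] at hHw
  have hpi : (Real.pi : ℂ) ≠ 0 := by
    exact_mod_cast Real.pi_ne_zero
  have hval : H w + v₀ / (2 * (Real.pi : ℂ) * Complex.I * (w - w₀))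
      = v₀ / (2 * (Real.pi : ℂ) * Complex.I * (w₀ + w)) := by
    rw [hHw]
    have hwd : w - w₀ ≠ 0 := fun h => hdiff_ne (by linear_combination -h)
    have hI : Complex.I ≠ 0 := Complex.I_ne_zero
    have hneg : -w₀ - w ≠ 0 := fun h => hsum_ne (by linear_combination -h)
    have hc : (2 * (Real.pi : ℂ) * Complex.I) ≠ 0 := by
      simp [hpi, Complex.I_ne_zero]
    have key2 : v₀ / (w₀ - w) - v₀ / (-w₀ - w) + v₀ / (w - w₀) = v₀ / (w₀ + w) := by
      field_simp
      ring
    have e1 : ∀ d : ℂ, v₀ / (2 * (Real.pi : ℂ) * Complex.I * d)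
        = (2 * (Real.pi : ℂ) * Complex.I)⁻¹ * (v₀ / d) := by
      intro d
      rw [mul_comm (2 * (Real.pi : ℂ) * Complex.I) d, ← div_div,
        div_eq_inv_mul (v₀ / d)]
    rw [e1, e1, ← mul_add, key2]
  rw [hval]
  have : ‖v₀ / (2 * (Real.pi : ℂ) * Complex.I * (w₀ + w))‖
      = ‖v₀‖ / (2 * Real.pi * ‖w₀ + w‖) := by
    simp [map_div₀, map_mul,
      abs_of_pos Real.pi_pos]
  rw [this]
  have hpos : (0:ℝ) < 2 * Real.pi := by positivity
  have h1 : ‖v₀‖ / (2 * Real.pi * ‖w₀ + w‖)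
      ≤ ‖v₀‖ / (2 * Real.pi) := by
    apply div_le_div_of_nonneg_left (by positivity) hpos
    nlinarith
  linarith
end

section
/- Let W : ∂𝔻 → ℂ be bounded measurable and satisfy the λ-Hölder condition at w₀ ∈ ∂𝔻 for some 0 < λ < 1, i.e., |W(ζ) − W(w₀)| ≤ C|ζ − w₀|^λ. Then K(w) = (1/(2πi)) ∫_{∂𝔻} W(ζ)/(ζ−w)² dζ satisfies K(w) = O(|w − w₀|^{λ−1}) as w → w₀ within any Stolz angle at w₀. -/
open Metric
open Real

noncomputable def Complex.abs : AbsoluteValue ℂ ℝ := IsAbsoluteValue.toAbsoluteValue (norm : ℂ → ℝ)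

@[simp] lemma Complex.abs_apply' (z : ℂ) : Complex.abs z = ‖z‖ := rfl

lemma Complex.norm_eq_abs (z : ℂ) : ‖z‖ = Complex.abs z := rfl

lemma Complex.abs_conj (z : ℂ) : Complex.abs ((starRingEnd ℂ) z) = Complex.abs z := by
  simp

lemma Complex.sq_abs (z : ℂ) : Complex.abs z ^ 2 = Complex.normSq z := by
  simp [Complex.sq_norm]

lemma Complex.abs_mul_cos_arg (z : ℂ) : Complex.abs z * Real.cos (Complex.arg z) = z.re :=
  Complex.norm_mul_cos_arg z

lemma Complex.abs_mul_exp_arg_mul_I (z : ℂ) :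
    (Complex.abs z : ℂ) * Complex.exp (Complex.arg z * Complex.I) = z :=
  Complex.norm_mul_exp_arg_mul_I z

lemma abs_exp_I_sub_one (t : ℝ) :
    Complex.abs (Complex.exp (t * Complex.I) - 1) = 2 * |Real.sin (t / 2)| := by
  rw [Complex.abs_apply', Complex.norm_def, Complex.normSq_apply]
  have hre : (Complex.exp (t * Complex.I) - 1).re = Real.cos t - 1 := by
    simp [Complex.exp_ofReal_mul_I_re]
  have him : (Complex.exp (t * Complex.I) - 1).im = Real.sin t := by
    simp [Complex.exp_ofReal_mul_I_im]
  rw [hre, him]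
  have h1 : Real.cos t = 1 - 2 * Real.sin (t / 2) ^ 2 := by
    have h2 : Real.cos (2 * (t/2)) = 2 * Real.cos (t/2)^2 - 1 := Real.cos_two_mul _
    rw [show 2*(t/2) = t by ring] at h2
    have h3 := Real.sin_sq_add_cos_sq (t/2)
    linarith
  have : (Real.cos t - 1) * (Real.cos t - 1) + Real.sin t * Real.sin t
      = (2 * |Real.sin (t/2)|) ^ 2 := by
    rw [h1]
    have : |Real.sin (t/2)| ^ 2 = Real.sin (t/2) ^ 2 := sq_abs _
    nlinarith [Real.sin_sq_add_cos_sq t]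
  rw [this, Real.sqrt_sq (by positivity)]

lemma chord_le (t : ℝ) : Complex.abs (Complex.exp (t * Complex.I) - 1) ≤ |t| := by
  rw [abs_exp_I_sub_one]
  have h := Real.abs_sin_le_abs (x := t / 2)
  calc 2 * |Real.sin (t / 2)| ≤ 2 * |t / 2| := by linarith
    _ = |t| := by rw [abs_div]; simp; ring

lemma chord_ge {t : ℝ} (ht : |t| ≤ π) :
    2 / π * |t| ≤ Complex.abs (Complex.exp (t * Complex.I) - 1) := by
  rw [abs_exp_I_sub_one]
  have h1 : 2 / π * |t / 2| ≤ |Real.sin (t / 2)| :=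
    Real.mul_abs_le_abs_sin (by rw [abs_div]; simp; linarith [abs_nonneg t])
  rw [abs_div, abs_two] at h1
  have hpi : (0:ℝ) < π := Real.pi_pos
  calc 2 / π * |t| = 2 * (2 / π * (|t| / 2)) := by ring
    _ ≤ 2 * |Real.sin (t / 2)| := by linarith

lemma stolz_key {w₀ : ℂ} (hw₀ : Complex.abs w₀ = 1) {α : ℝ} (hα : α ∈ Set.Ioo 0 (π/2))
    {w : ℂ} (hw : w ∈ stolzAngle w₀ α) :
    Real.cos α / 2 * Complex.abs (w - w₀) ≤ 1 - Complex.abs w := by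
  obtain ⟨hball, harg, hdist⟩ := hw
  set u : ℂ := 1 - (starRingEnd ℂ) w₀ * w with hu
  have habsu : Complex.abs u = Complex.abs (w₀ - w) := by
    have h : u = (starRingEnd ℂ) w₀ * (w₀ - w) := by
      rw [hu, mul_sub]
      congr 1
      rw [← Complex.normSq_eq_conj_mul_self, ← Complex.sq_abs, hw₀]
      norm_num
    rw [h, map_mul, Complex.abs_conj, hw₀, one_mul]
  have hre : Real.cos α * Complex.abs u ≤ u.re := by
    rcases eq_or_ne u 0 with h0 | h0
    · simp [h0]
    · have h1 : Real.cos α ≤ Real.cos |Complex.arg u| := by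
        apply Real.cos_le_cos_of_nonneg_of_le_pi (abs_nonneg _)
        · linarith [hα.2, Real.pi_pos]
        · exact harg.le
      rw [Real.cos_abs] at h1
      calc Real.cos α * Complex.abs u ≤ Real.cos (Complex.arg u) * Complex.abs u :=
            mul_le_mul_of_nonneg_right h1 (AbsoluteValue.nonneg _ _)
        _ = u.re := by rw [mul_comm]; exact Complex.abs_mul_cos_arg u
  have hsq : 1 - Complex.abs w ^ 2 = 2 * u.re - Complex.abs u ^ 2 := by
    have h1 : Complex.abs ((starRingEnd ℂ) w₀ * w) = Complex.abs w := by
      rw [map_mul, Complex.abs_conj, hw₀, one_mul]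
    have h2 : (starRingEnd ℂ) w₀ * w = 1 - u := by rw [hu]; ring
    rw [← h1, h2]
    have e1 : Complex.abs (1 - u) ^ 2 = (1 - u.re)^2 + u.im^2 := by
      rw [Complex.sq_abs, Complex.normSq_apply]; simp [sq]
    have e2 : Complex.abs u ^ 2 = u.re^2 + u.im^2 := by
      rw [Complex.sq_abs, Complex.normSq_apply]; simp [sq]
    rw [e1, e2]; ring
  have hd : Complex.abs (w - w₀) = Complex.abs u := by
    rw [habsu, ← AbsoluteValue.map_neg Complex.abs]; congr 1; ring
  have hcos : 0 < Real.cos α := Real.cos_pos_of_mem_Ioo ⟨by linarith [hα.1, Real.pi_pos], hα.2⟩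
  have habs1 : Complex.abs u < Real.cos α := by rw [habsu]; exact hdist
  have hw1 : Complex.abs w < 1 := by simpa using hball
  have key : Real.cos α * Complex.abs u ≤ 1 - Complex.abs w ^ 2 := by
    have h2 : Complex.abs u ^ 2 ≤ Real.cos α * Complex.abs u := by
      rw [sq]
      exact mul_le_mul_of_nonneg_right habs1.le (AbsoluteValue.nonneg _ _)
    linarith
  have h3 : 1 - Complex.abs w ^ 2 ≤ 2 * (1 - Complex.abs w) := by
    nlinarith [AbsoluteValue.nonneg Complex.abs w]
  rw [hd]
  linarith

lemma denom_lb {α : ℝ} (hα : α ∈ Set.Ioo 0 (π/2)) {w₀ w ζ : ℂ}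
    (hζ : Complex.abs ζ = 1)
    (hw1 : Real.cos α / 2 * Complex.abs (w - w₀) ≤ 1 - Complex.abs w) :
    Real.cos α / 4 * max (Complex.abs (ζ - w₀)) (Complex.abs (w - w₀))
      ≤ Complex.abs (ζ - w) := by
  have hcos : 0 < Real.cos α := Real.cos_pos_of_mem_Ioo ⟨by linarith [hα.1, Real.pi_pos], hα.2⟩
  have hcos1 : Real.cos α ≤ 1 := Real.cos_le_one α
  set s := Complex.abs (ζ - w₀) with hs
  set d := Complex.abs (w - w₀) with hd
  have h1 : 1 - Complex.abs w ≤ Complex.abs (ζ - w) := by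
    have h := norm_sub_norm_le ζ w
    rw [Complex.norm_eq_abs, Complex.norm_eq_abs, Complex.norm_eq_abs] at h
    linarith [hζ ▸ h]
  have hdb : Real.cos α / 2 * d ≤ Complex.abs (ζ - w) := le_trans hw1 h1
  rcases le_or_gt s (2 * d) with hc | hc
  · rcases max_cases s d with ⟨hm, _⟩ | ⟨hm, _⟩
    · rw [hm]
      nlinarith
    · rw [hm]
      nlinarith [AbsoluteValue.nonneg Complex.abs (w - w₀)]
  · have h2 : s - d ≤ Complex.abs (ζ - w) := by
      have h3 := norm_sub_norm_le (ζ - w₀) (w - w₀)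
      have h4 : (ζ - w₀) - (w - w₀) = ζ - w := by ring
      rw [h4, Complex.norm_eq_abs, Complex.norm_eq_abs, Complex.norm_eq_abs] at h3
      linarith
    have hm : max s d = s := max_eq_left (by linarith [AbsoluteValue.nonneg Complex.abs (w - w₀)])
    rw [hm]
    nlinarith [AbsoluteValue.nonneg Complex.abs (w - w₀)]

lemma real_int_bound {lam : ℝ} (h0 : 0 < lam) (h1 : lam < 1) :
    ∃ B > 0, ∀ d : ℝ, 0 < d → d ≤ 1 →
      (∫ t in (-π)..π, |t| ^ lam / (max (2 / π * |t|) d) ^ 2) ≤ B * d ^ (lam - 1) := by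
  have hπ : (0:ℝ) < π := Real.pi_pos
  have h2 : (0:ℝ) < 1 - lam := by linarith
  have h3 : (0:ℝ) < (π/2) ^ (lam+1) := Real.rpow_pos_of_pos (by positivity) _
  refine ⟨2 * ((π/2) ^ (lam+1) / (lam+1) + (π/2) ^ (lam+1) / (1-lam)), by positivity, ?_⟩
  intro d hd hd1
  set h : ℝ → ℝ := fun t => |t| ^ lam / (max (2 / π * |t|) d) ^ 2 with hh
  have hcont : Continuous h := by
    apply Continuous.div
    · exact continuous_abs.rpow_const (fun t => Or.inr h0.le)
    · exact (((continuous_const.mul continuous_abs).max continuous_const).pow 2)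
    · intro t
      have : d ≤ max (2 / π * |t|) d := le_max_right _ _
      positivity
  set t₁ : ℝ := π * d / 2 with ht₁
  have ht₁0 : 0 < t₁ := by positivity
  have ht₁π : t₁ ≤ π := by
    rw [ht₁]; nlinarith
  -- value of the first piece
  have hpiece1 : ∫ t in (0:ℝ)..t₁, h t = t₁ ^ (lam+1) / (lam+1) / d ^ 2 := by
    have hcongr : ∀ t ∈ Set.uIcc (0:ℝ) t₁, h t = t ^ lam / d ^ 2 := by
      intro t ht
      rw [Set.uIcc_of_le ht₁0.le] at ht
      have h2 : 2 / π * |t| ≤ d := by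
        rw [abs_of_nonneg ht.1]
        have := ht.2
        rw [ht₁] at this
        rw [div_mul_eq_mul_div, div_le_iff₀ hπ]
        nlinarith
      rw [hh]
      simp only
      rw [max_eq_right h2, abs_of_nonneg ht.1]
    rw [intervalIntegral.integral_congr hcongr, intervalIntegral.integral_div,
      integral_rpow (Or.inl (by linarith))]
    rw [Real.zero_rpow (by linarith), sub_zero]
  -- value of the second piece
  have hpiece2 : ∫ t in t₁..π, h t
      = (π/2) ^ 2 * ((π ^ (lam-1) - t₁ ^ (lam-1)) / (lam-1)) := by
    have hcongr : ∀ t ∈ Set.uIcc t₁ π, h t = (π/2) ^ 2 * t ^ (lam-2) := by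
      intro t ht
      rw [Set.uIcc_of_le ht₁π] at ht
      have ht0 : 0 < t := lt_of_lt_of_le ht₁0 ht.1
      have h2 : d ≤ 2 / π * |t| := by
        rw [abs_of_pos ht0]
        have := ht.1
        rw [ht₁] at this
        rw [div_mul_eq_mul_div, le_div_iff₀ hπ]
        nlinarith
      rw [hh]
      simp only
      rw [max_eq_left h2, abs_of_pos ht0]
      rw [Real.rpow_sub ht0, mul_pow, div_pow]
      rw [show (2:ℝ) = ((2:ℕ):ℝ) by norm_num, Real.rpow_natCast]
      field_simp
    rw [intervalIntegral.integral_congr hcongr, intervalIntegral.integral_const_mul,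
      integral_rpow (Or.inr ⟨by intro hc; rw [show (-1:ℝ) = lam - 2 - (lam - 1) by ring] at hc; nlinarith,
        by rw [Set.uIcc_of_le ht₁π]; intro hc; exact absurd hc.1 (by linarith)⟩)]
    rw [show lam - 2 + 1 = lam - 1 by ring]
  -- symmetry and splitting
  have hint : ∀ a b : ℝ, IntervalIntegrable h MeasureTheory.volume a b :=
    fun a b => hcont.intervalIntegrable a b
  have hsym : (∫ t in (-π)..(0:ℝ), h t) = ∫ t in (0:ℝ)..π, h t := by
    have hc := intervalIntegral.integral_comp_neg (a := (0:ℝ)) (b := π) (f := h)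
    simp only [neg_zero] at hc
    rw [← hc]
    apply intervalIntegral.integral_congr
    intro t _
    rw [hh]; simp
  have hsplit1 : (∫ t in (-π)..π, h t)
      = (∫ t in (-π)..(0:ℝ), h t) + ∫ t in (0:ℝ)..π, h t :=
    (intervalIntegral.integral_add_adjacent_intervals (hint _ _) (hint _ _)).symm
  have hsplit2 : (∫ t in (0:ℝ)..π, h t)
      = (∫ t in (0:ℝ)..t₁, h t) + ∫ t in t₁..π, h t :=
    (intervalIntegral.integral_add_adjacent_intervals (hint _ _) (hint _ _)).symm
  -- algebraic bounds for the two pieces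
  have hq : (0:ℝ) < π/2 := by positivity
  have ht1r : t₁ ^ (lam-1) = (π/2) ^ (lam-1) * d ^ (lam-1) := by
    rw [ht₁, show π * d / 2 = (π/2) * d by ring, Real.mul_rpow hq.le hd.le]
  have ht1r2 : t₁ ^ (lam+1) = (π/2) ^ (lam+1) * d ^ (lam+1) := by
    rw [ht₁, show π * d / 2 = (π/2) * d by ring, Real.mul_rpow hq.le hd.le]
  have hdpow : d ^ (lam+1) = d ^ (lam-1) * d ^ (2:ℕ) := by
    rw [show lam + 1 = (lam-1) + ((2:ℕ):ℝ) by push_cast; ring, Real.rpow_add hd, Real.rpow_natCast]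
  have hb1 : t₁ ^ (lam+1) / (lam+1) / d ^ 2 = (π/2)^(lam+1)/(lam+1) * d^(lam-1) := by
    rw [ht1r2, hdpow]
    field_simp
  have hpow2 : ((π/2):ℝ) ^ (2:ℕ) * (π/2) ^ (lam-1) = (π/2) ^ (lam+1) := by
    rw [← Real.rpow_natCast (π/2) 2, ← Real.rpow_add hq,
      show ((2:ℕ):ℝ) + (lam-1) = lam+1 by push_cast; ring]
  have hb2 : (π/2) ^ 2 * ((π ^ (lam-1) - t₁ ^ (lam-1)) / (lam-1))
      ≤ (π/2)^(lam+1)/(1-lam) * d^(lam-1) := by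
    have hππ : (0:ℝ) ≤ π ^ (lam-1) := (Real.rpow_pos_of_pos hπ _).le
    have hswap : (π ^ (lam-1) - t₁ ^ (lam-1)) / (lam-1)
        = (t₁ ^ (lam-1) - π ^ (lam-1)) / (1-lam) := by
      have h4 : lam - 1 ≠ 0 := by linarith
      have h5 : (1:ℝ) - lam ≠ 0 := by linarith
      field_simp
      ring
    rw [hswap]
    calc (π/2)^2 * ((t₁^(lam-1) - π^(lam-1))/(1-lam))
        ≤ (π/2)^2 * (t₁^(lam-1)/(1-lam)) := by
          gcongr
          linarith
      _ = (π/2)^(lam+1)/(1-lam) * d^(lam-1) := by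
          rw [ht1r, ← hpow2]
          ring
  rw [hsplit1, hsym, hsplit2, hpiece1, hpiece2]
  calc (t₁ ^ (lam+1) / (lam+1) / d ^ 2 + (π/2) ^ 2 * ((π ^ (lam-1) - t₁ ^ (lam-1)) / (lam-1)))
        + (t₁ ^ (lam+1) / (lam+1) / d ^ 2 + (π/2) ^ 2 * ((π ^ (lam-1) - t₁ ^ (lam-1)) / (lam-1)))
      ≤ ((π/2)^(lam+1)/(lam+1) * d^(lam-1) + (π/2)^(lam+1)/(1-lam) * d^(lam-1))
        + ((π/2)^(lam+1)/(lam+1) * d^(lam-1) + (π/2)^(lam+1)/(1-lam) * d^(lam-1)) := by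
        rw [hb1]
        linarith
    _ = 2 * ((π/2) ^ (lam+1) / (lam+1) + (π/2) ^ (lam+1) / (1-lam)) * d ^ (lam-1) := by ring

/-- if `W : ∂𝔻 → ℂ` is bounded measurable and λ-Hölder at
`w₀ ∈ ∂𝔻` (`0 < λ < 1`), then `K(w) = (1/2πi)∫_{∂𝔻} W(ζ)/(ζ−w)² dζ` satisfies
`K(w) = O(|w−w₀|^{λ−1})` as `w → w₀` in each Stolz angle at `w₀`. -/
theorem stmt_14 (Wf : ℂ → ℂ) (hmeas : Measurable Wf)
    (M : ℝ) (hbd : ∀ ζ ∈ sphere (0:ℂ) 1, ‖Wf ζ‖ ≤ M)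
    (w₀ : ℂ) (hw₀ : w₀ ∈ sphere (0:ℂ) 1)
    (lam C : ℝ) (hlam : lam ∈ Set.Ioo (0:ℝ) 1) (hC : 0 < C)
    (hHolder : ∀ ζ ∈ sphere (0:ℂ) 1, ‖Wf ζ - Wf w₀‖ ≤ C * ‖ζ - w₀‖ ^ lam)
    (K : ℂ → ℂ)
    (hK : ∀ w ∈ ball (0:ℂ) 1,
      K w = (2 * (Real.pi : ℂ) * Complex.I)⁻¹ *
        circleIntegral (fun ζ => Wf ζ / (ζ - w) ^ 2) 0 1) :
    ∀ α ∈ Set.Ioo (0:ℝ) (Real.pi / 2), ∃ C' > (0:ℝ), ∀ w ∈ stolzAngle w₀ α,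
      ‖K w‖ ≤ C' * ‖w - w₀‖ ^ (lam - 1) := by
  intro α hα
  have hπ : (0:ℝ) < π := Real.pi_pos
  have hcos : 0 < Real.cos α := Real.cos_pos_of_mem_Ioo ⟨by linarith [hα.1], hα.2⟩
  have hcos1 : Real.cos α ≤ 1 := Real.cos_le_one α
  obtain ⟨B, hB, hBint⟩ := real_int_bound hlam.1 hlam.2
  set c : ℝ := Real.cos α with hc
  refine ⟨16 * C * B / (2 * π * c ^ 2), by positivity, ?_⟩
  intro w hw
  have hball : w ∈ ball (0:ℂ) 1 := hw.1
  have hw1 : Complex.abs w < 1 := by simpa using hball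
  have hw₀1 : Complex.abs w₀ = 1 := by
    have := mem_sphere_zero_iff_norm.1 hw₀
    rwa [Complex.norm_eq_abs] at this
  have hkey := stolz_key hw₀1 hα hw
  set d : ℝ := Complex.abs (w - w₀) with hdd
  have hd0 : 0 < d := by
    rw [hdd]
    apply AbsoluteValue.pos
    intro h
    rw [sub_eq_zero] at h
    rw [h, hw₀1] at hw1
    exact lt_irrefl _ hw1
  have hd1 : d ≤ 1 := by
    have h2 : Complex.abs (w₀ - w) < Real.cos α := hw.2.2
    rw [hdd, ← AbsoluteValue.map_neg Complex.abs, neg_sub]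
    linarith
  have h1w : 0 < 1 - Complex.abs w := by linarith
  have hden : ∀ ζ : ℂ, Complex.abs ζ = 1 →
      c/4 * max (Complex.abs (ζ - w₀)) d ≤ Complex.abs (ζ - w) :=
    fun ζ hζ => denom_lb hα hζ hkey
  set g : ℂ → ℂ := fun ζ => (Wf ζ - Wf w₀) / (ζ - w)^2 with hg
  -- pointwise bound on the circle (crude, for integrability)
  have hgb : ∀ ζ : ℂ, Complex.abs ζ = 1 → ‖g ζ‖ ≤ C * 2 ^ lam / (1 - Complex.abs w)^2 := by
    intro ζ hζ
    have hζs : ζ ∈ sphere (0:ℂ) 1 := by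
      rw [mem_sphere_zero_iff_norm, Complex.norm_eq_abs, hζ]
    have h1 : ‖Wf ζ - Wf w₀‖ ≤ C * 2 ^ lam := by
      refine le_trans (hHolder ζ hζs) ?_
      have h2 : ‖ζ - w₀‖ ≤ 2 := by
        calc ‖ζ - w₀‖ ≤ ‖ζ‖ + ‖w₀‖ := norm_sub_le _ _
          _ = 2 := by rw [Complex.norm_eq_abs, Complex.norm_eq_abs, hζ, hw₀1]; norm_num
      have h3 := Real.rpow_le_rpow (norm_nonneg (ζ - w₀)) h2 hlam.1.le
      nlinarith
    have hden1 : (1 - Complex.abs w)^2 ≤ ‖(ζ - w)^2‖ := by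
      rw [norm_pow, Complex.norm_eq_abs]
      apply pow_le_pow_left₀ h1w.le
      have h := norm_sub_norm_le ζ w
      rw [Complex.norm_eq_abs, Complex.norm_eq_abs, Complex.norm_eq_abs] at h
      linarith [hζ ▸ h]
    rw [hg]
    simp only
    rw [norm_div]
    exact div_le_div₀ (by positivity) h1 (by positivity) hden1
  -- measurability
  have hgm : Measurable g := by
    apply Measurable.div
    · exact hmeas.sub measurable_const
    · exact (measurable_id.sub_const w).pow_const 2
  have hgint' : ∀ (a b c' : ℝ),
      IntervalIntegrable (fun θ => g (circleMap 0 1 (θ + c'))) MeasureTheory.volume a b := by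
    intro a b c'
    apply IntervalIntegrable.mono_fun' (g := fun _ => C * 2 ^ lam / (1 - Complex.abs w)^2)
      intervalIntegrable_const
    · exact (hgm.comp ((continuous_circleMap 0 1).measurable.comp
        (measurable_id.add_const c'))).aestronglyMeasurable
    · filter_upwards with θ
      exact hgb _ (by simp)
  have hgint : CircleIntegrable g 0 1 := by
    show IntervalIntegrable (fun θ => g (circleMap 0 1 θ)) MeasureTheory.volume 0 (2*π)
    simpa using hgint' 0 (2*π) 0
  -- the constant part
  have hwns : w ∉ sphere (0:ℂ) |(1:ℝ)| := by
    intro h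
    rw [abs_one, mem_sphere_zero_iff_norm, Complex.norm_eq_abs] at h
    rw [h] at hw1
    exact lt_irrefl _ hw1
  have hzint0 : CircleIntegrable (fun ζ : ℂ => (ζ - w)^(-2:ℤ)) 0 1 :=
    circleIntegrable_sub_zpow_iff.2 (Or.inr (Or.inr hwns))
  have hzint : CircleIntegrable (fun ζ : ℂ => Wf w₀ * (ζ - w)^(-2:ℤ)) 0 1 := by
    show IntervalIntegrable (fun θ => Wf w₀ * (circleMap 0 1 θ - w)^(-2:ℤ))
      MeasureTheory.volume 0 (2*π)
    exact IntervalIntegrable.const_mul hzint0 _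
  have hzero : (∮ ζ in C(0,1), Wf w₀ * (ζ - w)^(-2:ℤ)) = 0 := by
    have h1 : (∮ ζ in C(0,1), Wf w₀ • (ζ - w)^(-2:ℤ))
        = Wf w₀ • ∮ ζ in C(0,1), (ζ - w)^(-2:ℤ) :=
      circleIntegral.integral_smul (Wf w₀) (fun ζ => (ζ - w)^(-2:ℤ)) 0 1
    simp only [smul_eq_mul] at h1
    rw [h1, circleIntegral.integral_sub_zpow_of_ne (by norm_num) 0 w 1, mul_zero]
  -- rewriting the circle integral
  have hgeq : (∮ ζ in C(0,1), Wf ζ / (ζ - w)^2) = ∮ ζ in C(0,1), g ζ := by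
    have hpt : ∀ ζ : ℂ, g ζ = Wf ζ / (ζ - w)^2 - Wf w₀ * (ζ - w)^(-2:ℤ) := by
      intro ζ
      have hq : ((ζ - w):ℂ)^(-2:ℤ) = ((ζ - w)^2)⁻¹ := by
        rw [show (-2:ℤ) = -((2:ℕ):ℤ) by norm_num, zpow_neg, zpow_natCast]
      rw [hg]
      simp only
      rw [hq, ← div_eq_mul_inv, sub_div]
    have hf1int : CircleIntegrable (fun ζ => Wf ζ / (ζ - w)^2) 0 1 := by
      have h2 : (fun ζ => Wf ζ / (ζ - w)^2)
          = g + (fun ζ : ℂ => Wf w₀ * (ζ - w)^(-2:ℤ)) := by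
        funext ζ
        rw [Pi.add_apply, hpt ζ]
        ring
      rw [h2]
      exact hgint.add hzint
    calc (∮ ζ in C(0,1), Wf ζ / (ζ - w)^2)
        = (∮ ζ in C(0,1), Wf ζ / (ζ - w)^2) - ∮ ζ in C(0,1), Wf w₀ * (ζ - w)^(-2:ℤ) := by
          rw [hzero, sub_zero]
      _ = ∮ ζ in C(0,1), (Wf ζ / (ζ - w)^2 - Wf w₀ * (ζ - w)^(-2:ℤ)) :=
          (circleIntegral.integral_sub hf1int hzint).symm
      _ = ∮ ζ in C(0,1), g ζ := by
          apply congrArg (fun f => circleIntegral f 0 1)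
          funext ζ
          rw [hpt ζ]
  -- norm of the coefficient
  have hcoef : ‖(2 * (π:ℂ) * Complex.I)⁻¹‖ = (2*π)⁻¹ := by
    simp [Real.pi_pos.le]
  set φ : ℝ → ℝ := fun θ => ‖g (circleMap 0 1 θ)‖ with hφ
  have hnorm1 : ‖∮ ζ in C(0,1), g ζ‖ ≤ ∫ θ in (0:ℝ)..2*π, φ θ := by
    have h1 : ‖∫ θ in (0:ℝ)..2*π, deriv (circleMap 0 1) θ • g (circleMap 0 1 θ)‖
        ≤ ∫ θ in (0:ℝ)..2*π, ‖deriv (circleMap 0 1) θ • g (circleMap 0 1 θ)‖ :=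
      intervalIntegral.norm_integral_le_integral_norm Real.two_pi_pos.le
    calc ‖∮ ζ in C(0,1), g ζ‖
        = ‖∫ θ in (0:ℝ)..2*π, deriv (circleMap 0 1) θ • g (circleMap 0 1 θ)‖ := rfl
      _ ≤ ∫ θ in (0:ℝ)..2*π, ‖deriv (circleMap 0 1) θ • g (circleMap 0 1 θ)‖ := h1
      _ = ∫ θ in (0:ℝ)..2*π, φ θ := by
          apply intervalIntegral.integral_congr
          intro θ _
          simp only [deriv_circleMap, norm_smul]
          simp [hφ]
  set θ₀ : ℝ := Complex.arg w₀ with hθ₀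
  have hw0exp : Complex.exp ((θ₀:ℂ) * Complex.I) = w₀ := by
    have h := Complex.abs_mul_exp_arg_mul_I w₀
    rwa [hw₀1, Complex.ofReal_one, one_mul] at h
  have hper : Function.Periodic φ (2*π) := by
    intro x
    rw [hφ]
    simp only
    rw [periodic_circleMap 0 1 x]
  have hshift : (∫ θ in (0:ℝ)..2*π, φ θ) = ∫ t in (-π)..π, φ (t + θ₀) := by
    have h1 := hper.intervalIntegral_add_eq (θ₀ - π) 0
    rw [zero_add, show θ₀ - π + 2*π = θ₀ + π by ring] at h1
    rw [← h1]
    have h2 := intervalIntegral.integral_comp_add_right (a := -π) (b := π) (f := φ) θ₀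
    rw [h2, show -π + θ₀ = θ₀ - π by ring, show π + θ₀ = θ₀ + π by ring]
  -- pointwise estimate
  have hptw : ∀ t ∈ Set.Icc (-π) π,
      φ (t + θ₀) ≤ 16 * C / c^2 * (|t| ^ lam / (max (2/π * |t|) d) ^ 2) := by
    intro t ht
    have hts : |t| ≤ π := abs_le.2 ⟨by linarith [ht.1], ht.2⟩
    set ζ : ℂ := circleMap 0 1 (t + θ₀) with hζdef
    have hζ : Complex.abs ζ = 1 := by rw [hζdef]; simp
    have hζs : ζ ∈ sphere (0:ℂ) 1 := by
      rw [mem_sphere_zero_iff_norm, Complex.norm_eq_abs, hζ]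
    have hζw₀ : ζ - w₀ = w₀ * (Complex.exp ((t:ℂ) * Complex.I) - 1) := by
      rw [hζdef, circleMap_zero,
        show ((((t + θ₀):ℝ)):ℂ) * Complex.I = (θ₀:ℂ)*Complex.I + (t:ℂ)*Complex.I by
          push_cast; ring,
        Complex.exp_add, hw0exp]
      push_cast
      ring
    have hs : Complex.abs (ζ - w₀) = Complex.abs (Complex.exp ((t:ℂ) * Complex.I) - 1) := by
      rw [hζw₀, map_mul, hw₀1, one_mul]
    have hsle : Complex.abs (ζ - w₀) ≤ |t| := by rw [hs]; exact chord_le t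
    have hsge : 2/π * |t| ≤ Complex.abs (ζ - w₀) := by rw [hs]; exact chord_ge hts
    have hmaxpos : 0 < max (2/π * |t|) d := lt_of_lt_of_le hd0 (le_max_right _ _)
    have hdenb : c/4 * max (2/π * |t|) d ≤ Complex.abs (ζ - w) := by
      refine le_trans ?_ (hden ζ hζ)
      exact mul_le_mul_of_nonneg_left (max_le_max hsge (le_refl d)) (by positivity)
    have hnum : ‖Wf ζ - Wf w₀‖ ≤ C * |t| ^ lam := by
      refine le_trans (hHolder ζ hζs) ?_
      refine mul_le_mul_of_nonneg_left ?_ hC.le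
      rw [Complex.norm_eq_abs]
      exact Real.rpow_le_rpow (AbsoluteValue.nonneg _ _) hsle hlam.1.le
    have hφval : φ (t + θ₀) = ‖Wf ζ - Wf w₀‖ / Complex.abs (ζ - w) ^ 2 := by
      rw [hφ]
      simp only
      rw [← hζdef, hg]
      simp only
      rw [norm_div, norm_pow]
      rfl
    rw [hφval]
    have hstep : ‖Wf ζ - Wf w₀‖ / Complex.abs (ζ - w) ^ 2
        ≤ (C * |t| ^ lam) / ((c/4 * max (2/π * |t|) d) ^ 2) := by
      apply div_le_div₀ (by positivity) hnum (by positivity)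
      exact pow_le_pow_left₀ (by positivity) hdenb 2
    refine le_trans hstep (le_of_eq ?_)
    have hcne : c ≠ 0 := ne_of_gt hcos
    have hmne : max (2/π * |t|) d ≠ 0 := ne_of_gt hmaxpos
    field_simp
    ring
  -- integrate the pointwise estimate
  have hup : (∫ t in (-π)..π, φ (t + θ₀)) ≤ 16 * C / c^2 * (B * d ^ (lam - 1)) := by
    have hintR : IntervalIntegrable
        (fun t => 16 * C / c^2 * (|t| ^ lam / (max (2/π * |t|) d) ^ 2))
        MeasureTheory.volume (-π) π := by
      apply Continuous.intervalIntegrable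
      apply continuous_const.mul
      apply Continuous.div
      · exact continuous_abs.rpow_const (fun t => Or.inr hlam.1.le)
      · exact (((continuous_const.mul continuous_abs).max continuous_const).pow 2)
      · intro t
        have h5 : d ≤ max (2/π * |t|) d := le_max_right _ _
        positivity
    calc (∫ t in (-π)..π, φ (t + θ₀))
        ≤ ∫ t in (-π)..π, 16 * C / c^2 * (|t| ^ lam / (max (2/π * |t|) d) ^ 2) :=
          intervalIntegral.integral_mono_on (by linarith) ((hgint' (-π) π θ₀)).norm hintR hptw
      _ = 16 * C / c^2 * ∫ t in (-π)..π, |t| ^ lam / (max (2/π * |t|) d) ^ 2 :=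
          intervalIntegral.integral_const_mul _ _
      _ ≤ 16 * C / c^2 * (B * d ^ (lam - 1)) := by
          exact mul_le_mul_of_nonneg_left (hBint d hd0 hd1) (by positivity)
  -- final assembly
  have hKw : K w = (2 * (π:ℂ) * Complex.I)⁻¹ * ∮ ζ in C(0,1), g ζ := by
    rw [hK w hball, hgeq]
  rw [hKw, norm_mul, hcoef]
  have hfinal : ‖∮ ζ in C(0,1), g ζ‖ ≤ 16 * C / c^2 * (B * d ^ (lam - 1)) :=
    le_trans hnorm1 (le_trans (le_of_eq hshift) hup)
  have hnormeq : ‖w - w₀‖ = d := Complex.norm_eq_abs _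
  rw [hnormeq]
  calc (2*π)⁻¹ * ‖∮ ζ in C(0,1), g ζ‖
      ≤ (2*π)⁻¹ * (16*C/c^2 * (B * d^(lam-1))) :=
        mul_le_mul_of_nonneg_left hfinal (by positivity)
    _ = 16 * C * B / (2 * π * c ^ 2) * d ^ (lam - 1) := by
        field_simp
end
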